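/- arXiv:1406.3942 — 2 statements merged into one kernel-verified Lean document; each statement's English description precedes it below -/
import Mathlib

section
/- For countable ordinals α < β, every Σ⁰_α-function between topological spaces is also a Σ⁰_β-function. -/
/-- The Borel hierarchy: `Σ⁰₀ = {∅}`, `Σ⁰₁` = open sets, `Σ⁰₂` = countable unions of
differences of open sets, and for `α > 2`, `Σ⁰_α` = countable unions of complements of
sets from lower levels. -/
noncomputable def SigmaO (X : Type*) [TopologicalSpace X] : Ordinal → Set (Set X) :=
  WellFounded.fix Ordinal.lt_wf fun α ih =>
    if α = 0 then {(∅ : Set X)}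
    else if α = 1 then {s | IsOpen s}
    else if α = 2 then
      {s | ∃ f g : ℕ → Set X, (∀ n, IsOpen (f n) ∧ IsOpen (g n)) ∧ s = ⋃ n, f n \ g n}
    else
      {s | ∃ (β : ℕ → Ordinal) (A : ℕ → Set X),
        (∀ n, ∃ h : β n < α, A n ∈ ih (β n) h) ∧ s = ⋃ n, (A n)ᶜ}

/-- The dual classes `Π⁰_α`. -/
noncomputable def PiO (X : Type*) [TopologicalSpace X] (α : Ordinal) : Set (Set X) :=
  {s | sᶜ ∈ SigmaO X α}

/-!
Induction on the level `δ ≥ α`. If `δ = 2` then `α = 1`, so `f` is continuous and pulls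
differences of open sets back to differences of open sets. If `δ > 2`, a `Σ⁰_δ` set is a
countable union of complements of sets of levels `γₙ < δ`; by monotonicity of the hierarchy each
of them lies in level `max γₙ α ∈ [α, δ)`, where the induction hypothesis applies.
-/

theorem Order.two_le_of_one_lt {R : Type*} [Preorder R] [AddMonoidWithOne R] [SuccAddOrder R]
    {x : R} (h : 1 < x) : 2 ≤ x :=
  one_add_one_eq_two (R := R) ▸ Order.add_one_le_of_lt h

theorem sigmaO_def (X : Type*) [TopologicalSpace X] (α : Ordinal) :
    SigmaO X α =
      if α = 0 then {(∅ : Set X)}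
      else if α = 1 then {s | IsOpen s}
      else if α = 2 then
        {s | ∃ f g : ℕ → Set X, (∀ n, IsOpen (f n) ∧ IsOpen (g n)) ∧ s = ⋃ n, f n \ g n}
      else
        {s | ∃ (β : ℕ → Ordinal) (A : ℕ → Set X),
          (∀ n, ∃ _ : β n < α, A n ∈ SigmaO X (β n)) ∧ s = ⋃ n, (A n)ᶜ} := by
  rw [SigmaO, WellFounded.fix_eq]

section Hierarchy

universe u

variable {X : Type*} [TopologicalSpace X] {s : Set X} {γ δ : Ordinal.{u}}

theorem mem_sigmaO_zero : s ∈ SigmaO X 0 ↔ s = ∅ := by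
  rw [sigmaO_def]; simp

theorem mem_sigmaO_one : s ∈ SigmaO X 1 ↔ IsOpen s := by
  rw [sigmaO_def]; simp

theorem mem_sigmaO_two : s ∈ SigmaO X 2 ↔
    ∃ f g : ℕ → Set X, (∀ n, IsOpen (f n) ∧ IsOpen (g n)) ∧ s = ⋃ n, f n \ g n := by
  rw [sigmaO_def]; simp

theorem mem_sigmaO_of_two_lt (hδ : 2 < δ) : s ∈ SigmaO X δ ↔
    ∃ (β : ℕ → Ordinal) (A : ℕ → Set X), (∀ n, β n < δ ∧ A n ∈ SigmaO X (β n)) ∧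
      s = ⋃ n, (A n)ᶜ := by
  have h1 : δ ≠ 1 := (one_lt_two.trans hδ).ne'
  rw [sigmaO_def]; simp [hδ.ne', h1, (zero_lt_two.trans hδ).ne', exists_prop]

theorem empty_mem_sigmaO (δ : Ordinal) : (∅ : Set X) ∈ SigmaO X δ := by
  rcases le_or_gt δ 2 with hδ | hδ
  · obtain rfl | rfl | rfl := Order.le_two_iff.1 hδ
    · exact mem_sigmaO_zero.2 rfl
    · exact mem_sigmaO_one.2 isOpen_empty
    · exact mem_sigmaO_two.2 ⟨fun _ => ∅, fun _ => ∅, fun _ => ⟨isOpen_empty, isOpen_empty⟩,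
        by simp⟩
  · exact (mem_sigmaO_of_two_lt hδ).2 ⟨fun _ => 1, fun _ => Set.univ,
      fun _ => ⟨one_lt_two.trans hδ, mem_sigmaO_one.2 isOpen_univ⟩, by simp⟩

theorem sigmaO_zero_subset (δ : Ordinal) : SigmaO X 0 ⊆ SigmaO X δ := by
  intro s hs
  rw [mem_sigmaO_zero.1 hs]
  exact empty_mem_sigmaO δ

theorem sigmaO_one_subset_two : SigmaO X 1 ⊆ SigmaO X 2 := fun s hs =>
  mem_sigmaO_two.2 ⟨fun _ => s, fun _ => ∅, fun _ => ⟨mem_sigmaO_one.1 hs, isOpen_empty⟩,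
    by simp [Set.iUnion_const]⟩

theorem sigmaO_subset_two (hγ : γ ≤ 2) : SigmaO X γ ⊆ SigmaO X (2 : Ordinal.{u}) := by
  obtain rfl | rfl | rfl := Order.le_two_iff.1 hγ
  · exact sigmaO_zero_subset 2
  · exact sigmaO_one_subset_two
  · exact Set.Subset.rfl

/-- Above level `2` every lower class is absorbed: a `Σ⁰₂` set `⋃ (fₙ \ gₙ)` is the union of the
complements of the `Σ⁰₂` sets `fₙᶜ ∪ gₙ`. -/
theorem sigmaO_subset_of_two_lt (hγδ : γ < δ) (hδ : 2 < δ) : SigmaO X γ ⊆ SigmaO X δ := by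
  intro s hs
  rw [mem_sigmaO_of_two_lt hδ]
  rcases le_or_gt γ 2 with hγ | hγ
  · obtain ⟨f, g, hfg, rfl⟩ := mem_sigmaO_two.1 (sigmaO_subset_two hγ hs)
    refine ⟨fun _ => 2, fun n => (f n)ᶜ ∪ g n, fun n => ⟨hδ, ?_⟩, by simp [Set.sdiff_eq]⟩
    refine mem_sigmaO_two.2 ⟨fun k => if k = 0 then Set.univ else g n,
      fun k => if k = 0 then f n else ∅, fun k => ?_, ?_⟩
    · dsimp only
      split_ifs <;> simp [hfg n]
    · ext x
      simp only [Set.mem_union, Set.mem_compl_iff, Set.mem_iUnion, Set.mem_sdiff]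
      refine ⟨fun hx => ?_, fun ⟨k, hk⟩ => ?_⟩
      · rcases hx with hx | hx
        exacts [⟨0, by simp [hx]⟩, ⟨1, by simp [hx]⟩]
      · by_cases k = 0 <;> simp_all
  · obtain ⟨β, A, hβA, rfl⟩ := (mem_sigmaO_of_two_lt hγ).1 hs
    exact ⟨β, A, fun n => ⟨(hβA n).1.trans hγδ, (hβA n).2⟩, rfl⟩

theorem sigmaO_mono (h : γ ≤ δ) : SigmaO X γ ⊆ SigmaO X δ := by
  rcases h.eq_or_lt with rfl | h
  · exact Set.Subset.rfl
  rcases le_or_gt δ 2 with hδ | hδ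
  · obtain rfl | rfl := Order.le_one_iff.1 (Order.lt_two_iff.1 (h.trans_le hδ))
    · exact sigmaO_zero_subset δ
    · obtain rfl : δ = 2 := le_antisymm hδ (Order.two_le_of_one_lt h)
      exact sigmaO_one_subset_two
  · exact sigmaO_subset_of_two_lt h hδ

end Hierarchy

section Functions

variable {X Y : Type*} [TopologicalSpace X] [TopologicalSpace Y] {f : X → Y} {α δ : Ordinal}

def IsSigmaOFunction (α : Ordinal) (f : X → Y) : Prop :=
  ∀ A ∈ SigmaO Y α, f ⁻¹' A ∈ SigmaO X α

theorem isSigmaOFunction_one_iff_continuous : IsSigmaOFunction 1 f ↔ Continuous f := by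
  simp only [IsSigmaOFunction, mem_sigmaO_one, continuous_def]

theorem Continuous.isSigmaOFunction_two (hf : Continuous f) : IsSigmaOFunction 2 f := by
  intro A hA
  obtain ⟨u, v, huv, rfl⟩ := mem_sigmaO_two.1 hA
  refine mem_sigmaO_two.2 ⟨fun n => f ⁻¹' u n, fun n => f ⁻¹' v n,
    fun n => ⟨(huv n).1.preimage hf, (huv n).2.preimage hf⟩, ?_⟩
  simp only [Set.preimage_iUnion, Set.preimage_sdiff]

theorem isSigmaOFunction_of_two_lt (hδ : 2 < δ)
    (h : ∀ γ < δ, ∀ A ∈ SigmaO Y γ, ∃ ε < δ, f ⁻¹' A ∈ SigmaO X ε) :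
    IsSigmaOFunction δ f := by
  intro A hA
  obtain ⟨γ, B, hγB, rfl⟩ := (mem_sigmaO_of_two_lt hδ).1 hA
  choose ε hεδ hε using fun n => h (γ n) (hγB n).1 (B n) (hγB n).2
  refine (mem_sigmaO_of_two_lt hδ).2 ⟨ε, fun n => f ⁻¹' B n, fun n => ⟨hεδ n, hε n⟩, ?_⟩
  simp only [Set.preimage_iUnion, Set.preimage_compl]

theorem IsSigmaOFunction.of_le (hα : 1 ≤ α) (hf : IsSigmaOFunction α f) (hαδ : α ≤ δ) :
    IsSigmaOFunction δ f := by
  induction δ using WellFoundedLT.induction with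
  | _ δ ih =>
    rcases hαδ.eq_or_lt with rfl | hαδ
    · exact hf
    rcases le_or_gt δ 2 with hδ | hδ
    · obtain rfl : α = 1 := le_antisymm (Order.lt_two_iff.1 (hαδ.trans_le hδ)) hα
      obtain rfl : δ = 2 := le_antisymm hδ (Order.two_le_of_one_lt hαδ)
      exact (isSigmaOFunction_one_iff_continuous.1 hf).isSigmaOFunction_two
    refine isSigmaOFunction_of_two_lt hδ fun γ hγ A hA => ⟨max γ α, max_lt hγ hαδ, ?_⟩
    exact ih _ (max_lt hγ hαδ) (le_max_right γ α) A (sigmaO_mono (le_max_left γ α) hA)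

end Functions

theorem sigma_function_mono_general {X Y : Type*} [TopologicalSpace X] [TopologicalSpace Y]
    (α β : Ordinal) (hα : 1 ≤ α) (hαβ : α < β)
    (f : X → Y) (hf : ∀ A ∈ SigmaO Y α, f ⁻¹' A ∈ SigmaO X α) :
    ∀ A ∈ SigmaO Y β, f ⁻¹' A ∈ SigmaO X β :=
  IsSigmaOFunction.of_le hα hf hαβ.le

/-- For countable ordinals `1 ≤ α < β`, every `Σ⁰_α`-function is a `Σ⁰_β`-function. -/
theorem sigma_function_mono {X Y : Type*} [TopologicalSpace X] [TopologicalSpace Y]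
    (α β : Ordinal) (hα : 1 ≤ α) (hαβ : α < β) (hβ : β < (Cardinal.aleph 1).ord)
    (f : X → Y) (hf : ∀ A ∈ SigmaO Y α, f ⁻¹' A ∈ SigmaO X α) :
    ∀ A ∈ SigmaO Y β, f ⁻¹' A ∈ SigmaO X β :=
  sigma_function_mono_general α β hα hαβ f hf
end

section
/- In the h-preorder on countable 2-trees without infinite chains, the canonical trees T_α and their label-swapped versions T̄_α satisfy: for all α < β < ω₁, T_α ⊔ T̄_α <_h T_β, and T_α, T̄_α are ≤_h-incomparable. -/
/-- A countable labeled poset with labels in `Fin k`. -/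
structure LPoset (k : ℕ) where
  carrier : Type
  [po : PartialOrder carrier]
  [cnt : Countable carrier]
  label : carrier → Fin k

attribute [instance] LPoset.po LPoset.cnt

namespace LPoset

/-- The h-preorder: existence of a monotone label-preserving map. -/
def Hle {k : ℕ} (P Q : LPoset k) : Prop :=
  ∃ f : P.carrier → Q.carrier, Monotone f ∧ ∀ x, Q.label (f x) = P.label x

/-- h-equivalence. -/
def Heq {k : ℕ} (P Q : LPoset k) : Prop := P.Hle Q ∧ Q.Hle P

/-- Strict h-order. -/
def Hlt {k : ℕ} (P Q : LPoset k) : Prop := P.Hle Q ∧ ¬ Q.Hle P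

/-- The label-swapped version of a 2-labeled poset. -/
def bar (P : LPoset 2) : LPoset 2 :=
  { carrier := P.carrier, label := fun x => 1 - P.label x }

/-- `p₀(P)`: adjoin a new greatest element labeled `0`. -/
def p0 (P : LPoset 2) : LPoset 2 :=
  { carrier := WithTop P.carrier,
    label := fun x => WithTop.recTopCoe 0 P.label x }

/-- Countable disjoint union of labeled posets (no order relations across components). -/
def unionN {k : ℕ} (F : ℕ → LPoset k) : LPoset k :=
  { carrier := Σ n, (F n).carrier, label := fun p => (F p.1).label p.2 }

/-- Binary disjoint union. -/
def sum {k : ℕ} (P Q : LPoset k) : LPoset k :=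
  { carrier := P.carrier ⊕ Q.carrier, label := Sum.elim P.label Q.label }

/-- The singleton poset labeled `i`. -/
def single {k : ℕ} (i : Fin k) : LPoset k :=
  { carrier := PUnit, label := fun _ => i }

end LPoset

/-- An ordinal is *even* if it is `l + n` with `l` zero or limit and `n` even. -/
def OrdEven (α : Ordinal) : Prop :=
  ∃ (l : Ordinal) (n : ℕ), (l = 0 ∨ Order.IsSuccLimit l) ∧ α = l + n ∧ Even n

/-!
By transfinite induction one shows that `T` is `≤ₕ`-increasing together with its bars and that
no `T β` maps into `T̄ β`. The engine is that a monotone map out of a rooted tree `p₀ X` lands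
below the image of the root: into a forest it lands in one component, and it misses the root of
`(p₀ Y)‾`, which is labeled `1`. Hence `p₀ Z ≤ₕ (p₀ Z)‾` forces `p₀ Z ≤ₕ Z̄`; for
`Z = ⨆ₙ T̄_{αₙ}` this gives some `T̄_{αₘ} ≤ₕ T_{αₘ}`, against the induction hypothesis. The same
observation shows that the rooted `T β` cannot map into `T α ⊔ T̄ α` for `α < β`.
-/

universe u

namespace LPoset

variable {k : ℕ}

theorem Hle.trans {P Q R : LPoset k} (h₁ : P.Hle Q) (h₂ : Q.Hle R) : P.Hle R := by
  obtain ⟨f, hf, hfl⟩ := h₁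
  obtain ⟨g, hg, hgl⟩ := h₂
  exact ⟨g ∘ f, hg.comp hf, fun x => (hgl (f x)).trans (hfl x)⟩

/-- The whole image of a monotone map lies below the image of a greatest element `t`, so it
stays in any lower set containing `f t`. -/
theorem hle_of_isTop_of_mem_range {P Q R : LPoset k} {f : P.carrier → Q.carrier}
    (hf : Monotone f) (hfl : ∀ x, Q.label (f x) = P.label x) {t : P.carrier} (ht : IsTop t)
    (e : R.carrier ↪o Q.carrier) (he : ∀ r, Q.label (e r) = R.label r)
    (hlow : IsLowerSet (Set.range e)) (hft : f t ∈ Set.range e) : P.Hle R := by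
  choose g hg using fun x => hlow (hf (ht x)) hft
  refine ⟨g, fun x y hxy => e.le_iff_le.mp ?_, fun x => ?_⟩
  · rw [hg, hg]
    exact hf hxy
  · rw [← he, hg, hfl]

@[simp]
theorem bar_bar (P : LPoset 2) : P.bar.bar = P := by
  cases P
  simp only [bar, sub_sub_cancel]

theorem Hle.bar {P Q : LPoset 2} (h : P.Hle Q) : P.bar.Hle Q.bar := by
  obtain ⟨f, hf, hfl⟩ := h
  exact ⟨f, hf, fun x => congrArg (1 - ·) (hfl x)⟩

theorem bar_hle_iff {P Q : LPoset 2} : P.bar.Hle Q ↔ P.Hle Q.bar :=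
  ⟨fun h => by simpa using h.bar, fun h => by simpa using h.bar⟩

theorem Heq.symm {P Q : LPoset k} (h : P.Heq Q) : Q.Heq P :=
  ⟨h.2, h.1⟩

theorem Heq.not_hle_bar {P Q : LPoset 2} (h : P.Heq Q) (hP : ¬ P.Hle P.bar) :
    ¬ Q.Hle Q.bar :=
  fun hQ => hP (h.1.trans (hQ.trans h.2.bar))

theorem not_single_hle_bar (i : Fin 2) : ¬ (single i).Hle (single i).bar := by
  rintro ⟨_, -, hl⟩
  have : 1 - i = i := hl PUnit.unit
  revert this
  fin_cases i <;> decide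

def root (X : LPoset 2) : (p0 X).carrier := (⊤ : WithTop X.carrier)

theorem isTop_root (X : LPoset 2) : IsTop (root X) := fun _ => le_top (α := WithTop X.carrier)

theorem hle_p0 (P : LPoset 2) : P.Hle (p0 P) :=
  ⟨WithTop.some, WithTop.coe_mono, fun _ => rfl⟩

theorem Hle.p0 {P Q : LPoset 2} (h : P.Hle Q) : (p0 P).Hle (p0 Q) := by
  obtain ⟨f, hf, hfl⟩ := h
  refine ⟨WithTop.map f, hf.withTop_map, ?_⟩
  rintro (_ | x)
  exacts [rfl, hfl x]

theorem single_zero_hle_p0 (P : LPoset 2) : (single 0).Hle (p0 P) :=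
  ⟨fun _ => root P, monotone_const, fun _ => rfl⟩

/-- The root of `p₀ X` is labeled `0`, so it cannot go to the root of `(p₀ Y)‾`, labeled `1`. -/
theorem p0_hle_bar_of_p0_hle_bar_p0 {X Y : LPoset 2} (h : (p0 X).Hle (p0 Y).bar) :
    (p0 X).Hle Y.bar := by
  obtain ⟨f, hf, hfl⟩ := h
  refine hle_of_isTop_of_mem_range hf hfl (isTop_root X)
    (WithTop.coeOrderHom : Y.carrier ↪o WithTop Y.carrier) (fun _ => rfl) ?_ ?_
  · rintro _ (_ | b) hb ⟨a, rfl⟩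
    exacts [absurd hb (WithTop.not_top_le_coe a), ⟨b, rfl⟩]
  rcases hft : f (root X) with _ | u
  · have hlabel := hfl (root X)
    rw [hft] at hlabel
    have h10 : (1 : Fin 2) - 0 = 0 := hlabel
    exact absurd h10 (by decide)
  · exact ⟨u, rfl⟩

theorem sum_hle {P Q R : LPoset k} (hP : P.Hle R) (hQ : Q.Hle R) : (sum P Q).Hle R := by
  obtain ⟨f, hf, hfl⟩ := hP
  obtain ⟨g, hg, hgl⟩ := hQ
  refine ⟨Sum.elim f g, ?_, Sum.rec hfl hgl⟩
  rintro (a | a) (b | b) hab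
  · exact hf (Sum.inl_le_inl_iff.mp hab)
  · exact absurd hab Sum.not_inl_le_inr
  · exact absurd hab Sum.not_inr_le_inl
  · exact hg (Sum.inr_le_inr_iff.mp hab)

theorem p0_hle_of_hle_sum {X P Q : LPoset 2} (h : (p0 X).Hle (sum P Q)) :
    (p0 X).Hle P ∨ (p0 X).Hle Q := by
  obtain ⟨f, hf, hfl⟩ := h
  rcases hft : f (root X) with u | u
  · refine .inl (hle_of_isTop_of_mem_range hf hfl (isTop_root X)
      (.ofMapLEIff Sum.inl fun _ _ => Sum.inl_le_inl_iff) (fun _ => rfl) ?_ ⟨u, hft.symm⟩)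
    rintro _ (b | b) hb ⟨a, rfl⟩
    exacts [⟨b, rfl⟩, absurd hb Sum.not_inr_le_inl]
  · refine .inr (hle_of_isTop_of_mem_range hf hfl (isTop_root X)
      (.ofMapLEIff Sum.inr fun _ _ => Sum.inr_le_inr_iff) (fun _ => rfl) ?_ ⟨u, hft.symm⟩)
    rintro _ (b | b) hb ⟨a, rfl⟩
    exacts [absurd hb Sum.not_inl_le_inr, ⟨b, rfl⟩]

theorem hle_unionN (F : ℕ → LPoset k) (m : ℕ) : (F m).Hle (unionN F) :=
  ⟨fun x => (⟨m, x⟩ : Σ n, (F n).carrier), fun _ _ h => Sigma.mk_le_mk_iff.mpr h, fun _ => rfl⟩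

theorem unionN_hle {F : ℕ → LPoset k} {R : LPoset k} (h : ∀ n, (F n).Hle R) :
    (unionN F).Hle R := by
  choose f hf hfl using h
  refine ⟨fun p => f p.1 p.2, ?_, fun p => hfl p.1 p.2⟩
  rintro _ _ ⟨n, x, y, hxy⟩
  exact hf n hxy

theorem bar_unionN (F : ℕ → LPoset 2) : (unionN F).bar = unionN fun n => (F n).bar :=
  rfl

theorem p0_hle_of_hle_unionN {X : LPoset 2} {F : ℕ → LPoset 2} (h : (p0 X).Hle (unionN F)) :
    ∃ m, (p0 X).Hle (F m) := by
  obtain ⟨f, hf, hfl⟩ := h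
  rcases hft : f (root X) with ⟨m, u⟩
  refine ⟨m, hle_of_isTop_of_mem_range hf hfl (isTop_root X)
    (.ofMapLEIff (fun x => (⟨m, x⟩ : Σ n, (F n).carrier)) fun _ _ => Sigma.mk_le_mk_iff)
    (fun _ => rfl) ?_ ⟨u, hft.symm⟩⟩
  rintro _ ⟨n, b⟩ hb ⟨a, rfl⟩
  change (⟨n, b⟩ : Σ n, (F n).carrier) ≤ ⟨m, a⟩ at hb
  cases hb
  exact ⟨b, rfl⟩

theorem not_p0_bar_hle_bar {P : LPoset 2} (hP : ¬ P.Hle P.bar) :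
    ¬ (p0 P.bar).Hle (p0 P.bar).bar := by
  intro h
  have h' := p0_hle_bar_of_p0_hle_bar_p0 h
  rw [bar_bar] at h'
  exact hP (bar_hle_iff.mp ((hle_p0 _).trans h'))

theorem not_p0_unionN_bar_hle_bar {F : ℕ → LPoset 2} (hF : ∀ n, ¬ (F n).Hle (F n).bar) :
    ¬ (p0 (unionN fun n => (F n).bar)).Hle (p0 (unionN fun n => (F n).bar)).bar := by
  intro h
  have h' := p0_hle_bar_of_p0_hle_bar_p0 h
  simp only [bar_unionN, bar_bar] at h'
  obtain ⟨m, hm⟩ := p0_hle_of_hle_unionN h'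
  exact hF m (bar_hle_iff.mp (((hle_unionN _ m).trans (hle_p0 _)).trans hm))

/-- A rooted `Y` maps into a single component of `P ⊔ P̄`. -/
theorem not_hle_sum_bar_of_heq_p0 {P Y Z : LPoset 2} (hY : Y.Heq (p0 Z)) (hP : P.Hle Y)
    (hPbar : P.bar.Hle Y) (hP' : ¬ P.Hle P.bar) : ¬ Y.Hle (sum P P.bar) := by
  intro h
  rcases p0_hle_of_hle_sum (hY.2.trans h) with hZ | hZ
  · exact hP' (bar_hle_iff.mp (hPbar.trans (hY.1.trans hZ)))
  · exact hP' (hP.trans (hY.1.trans hZ))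

end LPoset

open LPoset Order

structure IsCanonicalFamily (T : Ordinal.{u} → LPoset 2) : Prop where
  zero : (T 0).Heq (single 0)
  add_one : ∀ α < (Cardinal.aleph 1).ord, (T (α + 1)).Heq (p0 (T α).bar)
  limit : ∀ lam < (Cardinal.aleph 1).ord, IsSuccLimit lam → ∃ a : ℕ → Ordinal.{u},
    StrictMono a ∧ (⨆ n, a n) = lam ∧ (T lam).Heq (p0 (unionN fun n => (T (a n)).bar))

/-- `hle_p0_bar` is carried along only to get `T γ ≤ T (γ + 1)` in the successor step. -/
structure CanonicalStage (T : Ordinal.{u} → LPoset 2) (β : Ordinal.{u}) : Prop where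
  hle_of_lt : ∀ α < β, (T α).Hle (T β)
  bar_hle_of_lt : ∀ α < β, (T α).bar.Hle (T β)
  hle_p0_bar : (T β).Hle (p0 (T β).bar)
  not_hle_bar : ¬ (T β).Hle (T β).bar

namespace CanonicalStage

variable {T : Ordinal.{u} → LPoset 2}

theorem zero (h : (T 0).Heq (single 0)) : CanonicalStage T 0 where
  hle_of_lt _ hα := absurd hα not_lt_zero
  bar_hle_of_lt _ hα := absurd hα not_lt_zero
  hle_p0_bar := h.1.trans (single_zero_hle_p0 _)
  not_hle_bar := h.symm.not_hle_bar (not_single_hle_bar 0)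

theorem add_one {γ : Ordinal.{u}} (hγ : CanonicalStage T γ)
    (h : (T (γ + 1)).Heq (p0 (T γ).bar)) : CanonicalStage T (γ + 1) := by
  have hle : (T γ).Hle (T (γ + 1)) := hγ.hle_p0_bar.trans h.2
  have hbar : (T γ).bar.Hle (T (γ + 1)) := (hle_p0 _).trans h.2
  have hle_of_le : ∀ α ≤ γ, (T α).Hle (T (γ + 1)) ∧ (T α).bar.Hle (T (γ + 1)) := by
    intro α hα
    rcases hα.lt_or_eq with hα | rfl
    · exact ⟨(hγ.hle_of_lt α hα).trans hle, (hγ.bar_hle_of_lt α hα).trans hle⟩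
    · exact ⟨hle, hbar⟩
  refine ⟨fun α hα => (hle_of_le α (lt_add_one_iff.mp hα)).1,
    fun α hα => (hle_of_le α (lt_add_one_iff.mp hα)).2, h.1.trans hle.bar.p0, ?_⟩
  exact h.symm.not_hle_bar (not_p0_bar_hle_bar hγ.not_hle_bar)

theorem of_unionN {β : Ordinal.{u}} {a : ℕ → Ordinal.{u}} (ha : ∀ n, a n < β)
    (hcof : ∀ α < β, ∃ n, α < a n) (h : (T β).Heq (p0 (unionN fun n => (T (a n)).bar)))
    (hstage : ∀ n, CanonicalStage T (a n)) : CanonicalStage T β := by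
  have hcomp : ∀ n, (T (a n)).bar.Hle (T β) := fun n =>
    ((hle_unionN _ n).trans (hle_p0 _)).trans h.2
  have hle : ∀ α < β, (T α).Hle (T β) := fun α hα => by
    obtain ⟨n, hn⟩ := hcof α hα
    exact (bar_hle_iff.mp ((hstage n).bar_hle_of_lt α hn)).trans (hcomp n)
  refine ⟨hle, fun α hα => ?_, h.1.trans (unionN_hle fun n => (hle (a n) (ha n)).bar).p0, ?_⟩
  · obtain ⟨n, hn⟩ := hcof α hα
    exact ((hstage n).hle_of_lt α hn).bar.trans (hcomp n)
  · exact h.symm.not_hle_bar (not_p0_unionN_bar_hle_bar fun n => (hstage n).not_hle_bar)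

end CanonicalStage

namespace IsCanonicalFamily

variable {T : Ordinal.{u} → LPoset 2}

theorem canonicalStage (hT : IsCanonicalFamily T) {β : Ordinal.{u}}
    (hβ : β < (Cardinal.aleph 1).ord) : CanonicalStage T β := by
  induction β using Ordinal.limitRecOn with
  | zero => exact .zero hT.zero
  | add_one γ ih =>
    have hγ := (lt_add_one γ).trans hβ
    exact (ih hγ).add_one (hT.add_one γ hγ)
  | limit β hlim ih =>
    obtain ⟨a, hmono, hsup, h⟩ := hT.limit β hβ hlim
    have hbdd : BddAbove (Set.range a) := Ordinal.bddAbove_of_small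
    have ha : ∀ n, a n < β := fun n =>
      hsup ▸ (lt_ciSup_iff' hbdd).2 ⟨n + 1, hmono n.lt_succ_self⟩
    exact .of_unionN ha (fun α hα => (lt_ciSup_iff' hbdd).1 (hsup ▸ hα)) h
      fun n => ih (a n) (ha n) ((ha n).trans hβ)

theorem exists_heq_p0 (hT : IsCanonicalFamily T) {β : Ordinal.{u}}
    (hβ : β < (Cardinal.aleph 1).ord) (hβ0 : β ≠ 0) : ∃ Z, (T β).Heq (p0 Z) := by
  rcases Ordinal.zero_or_succ_or_isSuccLimit β with rfl | ⟨γ, rfl⟩ | hlim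
  · exact absurd rfl hβ0
  · exact ⟨_, hT.add_one γ ((lt_succ γ).trans hβ)⟩
  · obtain ⟨a, -, -, h⟩ := hT.limit β hβ hlim
    exact ⟨_, h⟩

end IsCanonicalFamily

/-- For any family `{T_α}` of canonical 2-labeled trees, i.e. satisfying the defining
recursion (`T₀` a singleton labeled 0, `T_{α+1} ≡ p₀(T̄_α)`, and at limits
`T_λ ≡ p₀(⨆_n T̄_{αₙ})` for odd ordinals `α₀ < α₁ < ⋯` with supremum `λ`), we have:
for all `α < β < ω₁`, `T_α ⊔ T̄_α <_h T_β`, and `T_α`, `T̄_α` are `≤_h`-incomparable. -/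
theorem canonical_trees_strict_increasing (T : Ordinal → LPoset 2)
    (h0 : (T 0).Heq (LPoset.single 0))
    (hsucc : ∀ α : Ordinal, α < (Cardinal.aleph 1).ord →
      (T (α + 1)).Heq (LPoset.p0 (T α).bar))
    (hlim : ∀ lam : Ordinal, lam < (Cardinal.aleph 1).ord → Order.IsSuccLimit lam →
      ∃ a : ℕ → Ordinal, StrictMono a ∧ (∀ n, ¬ OrdEven (a n)) ∧ (⨆ n, a n) = lam ∧
        (T lam).Heq (LPoset.p0 (LPoset.unionN fun n => (T (a n)).bar))) :
    ∀ α β : Ordinal, α < β → β < (Cardinal.aleph 1).ord →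
      (LPoset.sum (T α) (T α).bar).Hlt (T β) ∧
      ¬ (T α).Hle (T α).bar ∧ ¬ (T α).bar.Hle (T α) := by
  intro α β hαβ hβ
  have hT : IsCanonicalFamily T := ⟨h0, hsucc, fun lam hlam hl => by
    obtain ⟨a, hmono, -, hsup, h⟩ := hlim lam hlam hl
    exact ⟨a, hmono, hsup, h⟩⟩
  have hα := hT.canonicalStage (hαβ.trans hβ)
  have hβ' := hT.canonicalStage hβ
  obtain ⟨Z, hZ⟩ := hT.exists_heq_p0 hβ (pos_of_gt hαβ).ne'
  have hle := hβ'.hle_of_lt α hαβ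
  have hbar := hβ'.bar_hle_of_lt α hαβ
  exact ⟨⟨sum_hle hle hbar, not_hle_sum_bar_of_heq_p0 hZ hle hbar hα.not_hle_bar⟩,
    hα.not_hle_bar, mt bar_hle_iff.mp hα.not_hle_bar⟩
end
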